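/- Let a = 1/2. For every pair (T,T') ∈ {A,B,C,D}² with (T,T') ≠ (A,B), there exist nonnegative real numbers κ, κ̄, κ', κ̄' (depending only on (T,T')) with κ + κ̄ = 1/4 and κ' + κ̄' = 1/4, such that for all real X, X̄, X', X̄', Z, Γ and all signs σ, σ' ∈ {−1,+1}: H_ln + H_linear + H_tree − Γ/4 ≥ κ·X + κ̄·X̄ + κ'·X' + κ̄'·X̄' (where H_ln, H_linear, H_tree are evaluated at a = 1/2 on the configuration (X,X̄,σ,T), (Z,Γ), (X',X̄',σ',T')). -/
import Mathlib


open MeasureTheory Real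

/-- Tree labels A, B, C, D encoded as `Fin 4`. -/
abbrev TreeLabel := Fin 4

def lA : TreeLabel := 0
def lB : TreeLabel := 1
def lC : TreeLabel := 2
def lD : TreeLabel := 3

/-- A cycle configuration `(X, X̄, σ, T)`; the sign `σ` is encoded as a `Bool`. -/
abbrev CycleConfig := ℝ × ℝ × Bool × TreeLabel

/-- The numerical value of a sign. -/
noncomputable def sgnv (b : Bool) : ℝ := if b then 1 else -1

/-- Real-valued indicator of a proposition. -/
noncomputable def indR (p : Prop) [Decidable p] : ℝ := if p then 1 else 0

/-- `U = (X + X̄)/2`. -/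
noncomputable def Uof (ω : CycleConfig) : ℝ := (ω.1 + ω.2.1) / 2

/-- `W = Γ + U' − U`. -/
noncomputable def Wof (ω : CycleConfig) (Γ : ℝ) (ω' : CycleConfig) : ℝ :=
  Γ + Uof ω' - Uof ω

noncomputable def Hln (a : ℝ) (ω : CycleConfig) (Z Γ : ℝ) (ω' : CycleConfig) : ℝ :=
  ((3 * a + 1) / 2) *
    (Real.log (exp (ω.1 + Wof ω Γ ω' / 2) + exp (ω'.1 - Wof ω Γ ω' / 2) + exp Z)
      + Real.log (exp (ω.2.1 + Wof ω Γ ω' / 2) + exp (ω'.2.1 - Wof ω Γ ω' / 2) + exp Z))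

noncomputable def Hlinear (a : ℝ) (ω : CycleConfig) (Z : ℝ) (ω' : CycleConfig) : ℝ :=
  -(a + 1 / 2) * (Uof ω + Uof ω' + Z)

noncomputable def Htree (ω : CycleConfig) (Z Γ : ℝ) (ω' : CycleConfig) : ℝ :=
  (1 / 2) * (indR (ω.2.2.2 = lC) * ω.1 + indR (ω.2.2.2 = lD) * ω.2.1
      + indR (ω'.2.2.2 = lC) * ω'.1 + indR (ω'.2.2.2 = lD) * ω'.2.1)
    + (indR (ω'.2.2.2 = lB) + indR (ω.2.2.2 = lA)) * Z
    + (1 / 2) * (indR (ω'.2.2.2 = lB) - indR (ω.2.2.2 = lA)) * Wof ω Γ ω'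
    - (1 / 2) * (indR (ω.2.2.2 = lA) - indR (ω.2.2.2 = lB)) * Uof ω
    + (1 / 2) * (indR (ω'.2.2.2 = lA) - indR (ω'.2.2.2 = lB)) * Uof ω'

noncomputable def HexpI (ω : CycleConfig) (ω' : CycleConfig) : ℝ :=
  (1 / 4) * (exp (-ω.1) + exp (-ω.2.1) + exp (-ω'.1) + exp (-ω'.2.1))

noncomputable def HexpII (ω : CycleConfig) (Z Γ : ℝ) (ω' : CycleConfig) : ℝ :=
  (1 / 2) * (sgnv ω.2.2.1 * exp (Wof ω Γ ω' / 4) - sgnv ω'.2.2.1 * exp (-Wof ω Γ ω' / 4)) ^ 2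
    * exp (-Z)

/-- The (finite part of the) middle Hamiltonian `H_middle,a,η`. -/
noncomputable def Hmid (a η : ℝ) (ω : CycleConfig) (Z Γ : ℝ) (ω' : CycleConfig) : ℝ :=
  Hln a ω Z Γ ω' + Hlinear a ω Z ω' + Htree ω Z Γ ω' + HexpI ω ω' + HexpII ω Z Γ ω' - η * Γ

/-- The left boundary Hamiltonian `H_left,a(Z|ω)`. -/
noncomputable def Hleft (a : ℝ) (Z : ℝ) (ω : CycleConfig) : ℝ :=
  a * Real.log (exp ω.2.1 + exp Z)
    + (a + 1 / 2) * (Real.log (exp ω.1 + exp Z) - Uof ω - Z)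
    + (1 / 2) * (indR (ω.2.2.2 = lC) * ω.1 + indR (ω.2.2.2 = lD) * ω.2.1)
    + indR (ω.2.2.2 = lB) * Z
    + (1 / 2) * (indR (ω.2.2.2 = lA) - indR (ω.2.2.2 = lB)) * Uof ω
    + (1 / 4) * (exp (-ω.1) + exp (-ω.2.1)) + (1 / 2) * exp (-Z)
    + Uof ω / 4

/-- The right boundary Hamiltonian `H_right,a(ω|Z)`. -/
noncomputable def Hright (a : ℝ) (ω : CycleConfig) (Z : ℝ) : ℝ :=
  (a + 1 / 2) * (Real.log (exp ω.1 + exp Z) + Real.log (exp ω.2.1 + exp Z) - Uof ω - Z)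
    + (1 / 2) * (indR (ω.2.2.2 = lC) * ω.1 + indR (ω.2.2.2 = lD) * ω.2.1)
    + indR (ω.2.2.2 = lA) * Z
    - (1 / 2) * (indR (ω.2.2.2 = lA) - indR (ω.2.2.2 = lB)) * Uof ω
    + (1 / 4) * (exp (-ω.1) + exp (-ω.2.1)) + (1 / 2) * exp (-Z)
    - Uof ω / 4

lemma log_combo (α β γ p q r : ℝ) (hα : 0 ≤ α) (hβ : 0 ≤ β) (hγ : 0 ≤ γ)
    (hsum : α + β + γ = 1) :
    α * p + β * q + γ * r ≤ Real.log (Real.exp p + Real.exp q + Real.exp r) := by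
  have hS : (0:ℝ) < Real.exp p + Real.exp q + Real.exp r := by positivity
  set L := Real.log (Real.exp p + Real.exp q + Real.exp r) with hL
  have hp : p ≤ L := by
    rw [hL, Real.le_log_iff_exp_le hS]; nlinarith [Real.exp_pos q, Real.exp_pos r]
  have hq : q ≤ L := by
    rw [hL, Real.le_log_iff_exp_le hS]; nlinarith [Real.exp_pos p, Real.exp_pos r]
  have hr : r ≤ L := by
    rw [hL, Real.le_log_iff_exp_le hS]; nlinarith [Real.exp_pos p, Real.exp_pos q]
  have hLs : α * L + β * L + γ * L = L := by linear_combination L * hsum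
  nlinarith [mul_le_mul_of_nonneg_left hp hα, mul_le_mul_of_nonneg_left hq hβ,
    mul_le_mul_of_nonneg_left hr hγ]

set_option maxHeartbeats 2000000 in
/-- Lemma 3.1: at `a = 1/2`, for each admissible pair of tree labels there are dual
variables `κ, κ̄, κ', κ̄' ≥ 0` summing pairwise to `1/4` such that
`H_ln + H_linear + H_tree − Γ/4` dominates the corresponding linear combination. -/
theorem linear_optimization_bound (T T' : TreeLabel) (hTT' : ¬(T = lA ∧ T' = lB)) :
    ∃ κ κb κ' κb' : ℝ,
      0 ≤ κ ∧ 0 ≤ κb ∧ 0 ≤ κ' ∧ 0 ≤ κb' ∧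
      κ + κb = 1 / 4 ∧ κ' + κb' = 1 / 4 ∧
      ∀ (X Xb X' Xb' Z Γ : ℝ) (σ σ' : Bool),
        κ * X + κb * Xb + κ' * X' + κb' * Xb' ≤
          Hln (1 / 2) (X, Xb, σ, T) Z Γ (X', Xb', σ', T')
            + Hlinear (1 / 2) (X, Xb, σ, T) Z (X', Xb', σ', T')
            + Htree (X, Xb, σ, T) Z Γ (X', Xb', σ', T')
            - Γ / 4 := by
  fin_cases T <;> fin_cases T'
  · refine ⟨(0:ℝ), (1/4:ℝ), (1/4:ℝ), (0:ℝ), by norm_num, by norm_num, by norm_num, by norm_num, by norm_num, by norm_num, ?_⟩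
    intro X Xb X' Xb' Z Γ σ σ'
    have h1 := log_combo (7/10:ℝ) (3/10:ℝ) (0:ℝ) (X + (Γ + (X' + Xb')/2 - (X + Xb)/2)/2) (X' - (Γ + (X' + Xb')/2 - (X + Xb)/2)/2) Z (by norm_num) (by norm_num) (by norm_num) (by norm_num)
    have h2 := log_combo (9/10:ℝ) (1/10:ℝ) (0:ℝ) (Xb + (Γ + (X' + Xb')/2 - (X + Xb)/2)/2) (Xb' - (Γ + (X' + Xb')/2 - (X + Xb)/2)/2) Z (by norm_num) (by norm_num) (by norm_num) (by norm_num)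
    simp +decide only [Hln, Hlinear, Htree, Uof, Wof, indR, lA, lB, lC, lD,
      if_true, if_false, ite_true, ite_false]
    linarith
  · exact absurd ⟨rfl, rfl⟩ hTT'
  · refine ⟨(1/4:ℝ), (0:ℝ), (1/4:ℝ), (0:ℝ), by norm_num, by norm_num, by norm_num, by norm_num, by norm_num, by norm_num, ?_⟩
    intro X Xb X' Xb' Z Γ σ σ'
    have h1 := log_combo (9/10:ℝ) (1/10:ℝ) (0:ℝ) (X + (Γ + (X' + Xb')/2 - (X + Xb)/2)/2) (X' - (Γ + (X' + Xb')/2 - (X + Xb)/2)/2) Z (by norm_num) (by norm_num) (by norm_num) (by norm_num)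
    have h2 := log_combo (7/10:ℝ) (3/10:ℝ) (0:ℝ) (Xb + (Γ + (X' + Xb')/2 - (X + Xb)/2)/2) (Xb' - (Γ + (X' + Xb')/2 - (X + Xb)/2)/2) Z (by norm_num) (by norm_num) (by norm_num) (by norm_num)
    simp +decide only [Hln, Hlinear, Htree, Uof, Wof, indR, lA, lB, lC, lD,
      if_true, if_false, ite_true, ite_false]
    linarith
  · refine ⟨(0:ℝ), (1/4:ℝ), (0:ℝ), (1/4:ℝ), by norm_num, by norm_num, by norm_num, by norm_num, by norm_num, by norm_num, ?_⟩
    intro X Xb X' Xb' Z Γ σ σ'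
    have h1 := log_combo (7/10:ℝ) (3/10:ℝ) (0:ℝ) (X + (Γ + (X' + Xb')/2 - (X + Xb)/2)/2) (X' - (Γ + (X' + Xb')/2 - (X + Xb)/2)/2) Z (by norm_num) (by norm_num) (by norm_num) (by norm_num)
    have h2 := log_combo (9/10:ℝ) (1/10:ℝ) (0:ℝ) (Xb + (Γ + (X' + Xb')/2 - (X + Xb)/2)/2) (Xb' - (Γ + (X' + Xb')/2 - (X + Xb)/2)/2) Z (by norm_num) (by norm_num) (by norm_num) (by norm_num)
    simp +decide only [Hln, Hlinear, Htree, Uof, Wof, indR, lA, lB, lC, lD,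
      if_true, if_false, ite_true, ite_false]
    linarith
  · refine ⟨(0:ℝ), (1/4:ℝ), (0:ℝ), (1/4:ℝ), by norm_num, by norm_num, by norm_num, by norm_num, by norm_num, by norm_num, ?_⟩
    intro X Xb X' Xb' Z Γ σ σ'
    have h1 := log_combo (3/10:ℝ) (1/10:ℝ) (3/5:ℝ) (X + (Γ + (X' + Xb')/2 - (X + Xb)/2)/2) (X' - (Γ + (X' + Xb')/2 - (X + Xb)/2)/2) Z (by norm_num) (by norm_num) (by norm_num) (by norm_num)
    have h2 := log_combo (1/2:ℝ) (3/10:ℝ) (1/5:ℝ) (Xb + (Γ + (X' + Xb')/2 - (X + Xb)/2)/2) (Xb' - (Γ + (X' + Xb')/2 - (X + Xb)/2)/2) Z (by norm_num) (by norm_num) (by norm_num) (by norm_num)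
    simp +decide only [Hln, Hlinear, Htree, Uof, Wof, indR, lA, lB, lC, lD,
      if_true, if_false, ite_true, ite_false]
    linarith
  · refine ⟨(0:ℝ), (1/4:ℝ), (1/4:ℝ), (0:ℝ), by norm_num, by norm_num, by norm_num, by norm_num, by norm_num, by norm_num, ?_⟩
    intro X Xb X' Xb' Z Γ σ σ'
    have h1 := log_combo (3/10:ℝ) (7/10:ℝ) (0:ℝ) (X + (Γ + (X' + Xb')/2 - (X + Xb)/2)/2) (X' - (Γ + (X' + Xb')/2 - (X + Xb)/2)/2) Z (by norm_num) (by norm_num) (by norm_num) (by norm_num)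
    have h2 := log_combo (1/2:ℝ) (1/2:ℝ) (0:ℝ) (Xb + (Γ + (X' + Xb')/2 - (X + Xb)/2)/2) (Xb' - (Γ + (X' + Xb')/2 - (X + Xb)/2)/2) Z (by norm_num) (by norm_num) (by norm_num) (by norm_num)
    simp +decide only [Hln, Hlinear, Htree, Uof, Wof, indR, lA, lB, lC, lD,
      if_true, if_false, ite_true, ite_false]
    linarith
  · refine ⟨(0:ℝ), (1/4:ℝ), (1/8:ℝ), (1/8:ℝ), by norm_num, by norm_num, by norm_num, by norm_num, by norm_num, by norm_num, ?_⟩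
    intro X Xb X' Xb' Z Γ σ σ'
    have h1 := log_combo (3/10:ℝ) (0:ℝ) (7/10:ℝ) (X + (Γ + (X' + Xb')/2 - (X + Xb)/2)/2) (X' - (Γ + (X' + Xb')/2 - (X + Xb)/2)/2) Z (by norm_num) (by norm_num) (by norm_num) (by norm_num)
    have h2 := log_combo (1/2:ℝ) (2/5:ℝ) (1/10:ℝ) (Xb + (Γ + (X' + Xb')/2 - (X + Xb)/2)/2) (Xb' - (Γ + (X' + Xb')/2 - (X + Xb)/2)/2) Z (by norm_num) (by norm_num) (by norm_num) (by norm_num)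
    simp +decide only [Hln, Hlinear, Htree, Uof, Wof, indR, lA, lB, lC, lD,
      if_true, if_false, ite_true, ite_false]
    linarith
  · refine ⟨(0:ℝ), (1/4:ℝ), (0:ℝ), (1/4:ℝ), by norm_num, by norm_num, by norm_num, by norm_num, by norm_num, by norm_num, ?_⟩
    intro X Xb X' Xb' Z Γ σ σ'
    have h1 := log_combo (3/10:ℝ) (3/10:ℝ) (2/5:ℝ) (X + (Γ + (X' + Xb')/2 - (X + Xb)/2)/2) (X' - (Γ + (X' + Xb')/2 - (X + Xb)/2)/2) Z (by norm_num) (by norm_num) (by norm_num) (by norm_num)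
    have h2 := log_combo (1/2:ℝ) (1/10:ℝ) (2/5:ℝ) (Xb + (Γ + (X' + Xb')/2 - (X + Xb)/2)/2) (Xb' - (Γ + (X' + Xb')/2 - (X + Xb)/2)/2) Z (by norm_num) (by norm_num) (by norm_num) (by norm_num)
    simp +decide only [Hln, Hlinear, Htree, Uof, Wof, indR, lA, lB, lC, lD,
      if_true, if_false, ite_true, ite_false]
    linarith
  · refine ⟨(0:ℝ), (1/4:ℝ), (0:ℝ), (1/4:ℝ), by norm_num, by norm_num, by norm_num, by norm_num, by norm_num, by norm_num, ?_⟩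
    intro X Xb X' Xb' Z Γ σ σ'
    have h1 := log_combo (1/10:ℝ) (1/10:ℝ) (4/5:ℝ) (X + (Γ + (X' + Xb')/2 - (X + Xb)/2)/2) (X' - (Γ + (X' + Xb')/2 - (X + Xb)/2)/2) Z (by norm_num) (by norm_num) (by norm_num) (by norm_num)
    have h2 := log_combo (7/10:ℝ) (3/10:ℝ) (0:ℝ) (Xb + (Γ + (X' + Xb')/2 - (X + Xb)/2)/2) (Xb' - (Γ + (X' + Xb')/2 - (X + Xb)/2)/2) Z (by norm_num) (by norm_num) (by norm_num) (by norm_num)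
    simp +decide only [Hln, Hlinear, Htree, Uof, Wof, indR, lA, lB, lC, lD,
      if_true, if_false, ite_true, ite_false]
    linarith
  · refine ⟨(1/4:ℝ), (0:ℝ), (1/4:ℝ), (0:ℝ), by norm_num, by norm_num, by norm_num, by norm_num, by norm_num, by norm_num, ?_⟩
    intro X Xb X' Xb' Z Γ σ σ'
    have h1 := log_combo (3/10:ℝ) (7/10:ℝ) (0:ℝ) (X + (Γ + (X' + Xb')/2 - (X + Xb)/2)/2) (X' - (Γ + (X' + Xb')/2 - (X + Xb)/2)/2) Z (by norm_num) (by norm_num) (by norm_num) (by norm_num)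
    have h2 := log_combo (1/2:ℝ) (1/2:ℝ) (0:ℝ) (Xb + (Γ + (X' + Xb')/2 - (X + Xb)/2)/2) (Xb' - (Γ + (X' + Xb')/2 - (X + Xb)/2)/2) Z (by norm_num) (by norm_num) (by norm_num) (by norm_num)
    simp +decide only [Hln, Hlinear, Htree, Uof, Wof, indR, lA, lB, lC, lD,
      if_true, if_false, ite_true, ite_false]
    linarith
  · refine ⟨(0:ℝ), (1/4:ℝ), (1/4:ℝ), (0:ℝ), by norm_num, by norm_num, by norm_num, by norm_num, by norm_num, by norm_num, ?_⟩
    intro X Xb X' Xb' Z Γ σ σ'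
    have h1 := log_combo (1/10:ℝ) (1/10:ℝ) (4/5:ℝ) (X + (Γ + (X' + Xb')/2 - (X + Xb)/2)/2) (X' - (Γ + (X' + Xb')/2 - (X + Xb)/2)/2) Z (by norm_num) (by norm_num) (by norm_num) (by norm_num)
    have h2 := log_combo (7/10:ℝ) (3/10:ℝ) (0:ℝ) (Xb + (Γ + (X' + Xb')/2 - (X + Xb)/2)/2) (Xb' - (Γ + (X' + Xb')/2 - (X + Xb)/2)/2) Z (by norm_num) (by norm_num) (by norm_num) (by norm_num)
    simp +decide only [Hln, Hlinear, Htree, Uof, Wof, indR, lA, lB, lC, lD,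
      if_true, if_false, ite_true, ite_false]
    linarith
  · refine ⟨(0:ℝ), (1/4:ℝ), (0:ℝ), (1/4:ℝ), by norm_num, by norm_num, by norm_num, by norm_num, by norm_num, by norm_num, ?_⟩
    intro X Xb X' Xb' Z Γ σ σ'
    have h1 := log_combo (1/10:ℝ) (3/10:ℝ) (3/5:ℝ) (X + (Γ + (X' + Xb')/2 - (X + Xb)/2)/2) (X' - (Γ + (X' + Xb')/2 - (X + Xb)/2)/2) Z (by norm_num) (by norm_num) (by norm_num) (by norm_num)
    have h2 := log_combo (7/10:ℝ) (1/10:ℝ) (1/5:ℝ) (Xb + (Γ + (X' + Xb')/2 - (X + Xb)/2)/2) (Xb' - (Γ + (X' + Xb')/2 - (X + Xb)/2)/2) Z (by norm_num) (by norm_num) (by norm_num) (by norm_num)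
    simp +decide only [Hln, Hlinear, Htree, Uof, Wof, indR, lA, lB, lC, lD,
      if_true, if_false, ite_true, ite_false]
    linarith
  · refine ⟨(0:ℝ), (1/4:ℝ), (0:ℝ), (1/4:ℝ), by norm_num, by norm_num, by norm_num, by norm_num, by norm_num, by norm_num, ?_⟩
    intro X Xb X' Xb' Z Γ σ σ'
    have h1 := log_combo (1/2:ℝ) (1/10:ℝ) (2/5:ℝ) (X + (Γ + (X' + Xb')/2 - (X + Xb)/2)/2) (X' - (Γ + (X' + Xb')/2 - (X + Xb)/2)/2) Z (by norm_num) (by norm_num) (by norm_num) (by norm_num)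
    have h2 := log_combo (3/10:ℝ) (3/10:ℝ) (2/5:ℝ) (Xb + (Γ + (X' + Xb')/2 - (X + Xb)/2)/2) (Xb' - (Γ + (X' + Xb')/2 - (X + Xb)/2)/2) Z (by norm_num) (by norm_num) (by norm_num) (by norm_num)
    simp +decide only [Hln, Hlinear, Htree, Uof, Wof, indR, lA, lB, lC, lD,
      if_true, if_false, ite_true, ite_false]
    linarith
  · refine ⟨(0:ℝ), (1/4:ℝ), (0:ℝ), (1/4:ℝ), by norm_num, by norm_num, by norm_num, by norm_num, by norm_num, by norm_num, ?_⟩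
    intro X Xb X' Xb' Z Γ σ σ'
    have h1 := log_combo (1/2:ℝ) (1/2:ℝ) (0:ℝ) (X + (Γ + (X' + Xb')/2 - (X + Xb)/2)/2) (X' - (Γ + (X' + Xb')/2 - (X + Xb)/2)/2) Z (by norm_num) (by norm_num) (by norm_num) (by norm_num)
    have h2 := log_combo (3/10:ℝ) (7/10:ℝ) (0:ℝ) (Xb + (Γ + (X' + Xb')/2 - (X + Xb)/2)/2) (Xb' - (Γ + (X' + Xb')/2 - (X + Xb)/2)/2) Z (by norm_num) (by norm_num) (by norm_num) (by norm_num)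
    simp +decide only [Hln, Hlinear, Htree, Uof, Wof, indR, lA, lB, lC, lD,
      if_true, if_false, ite_true, ite_false]
    linarith
  · refine ⟨(0:ℝ), (1/4:ℝ), (1/8:ℝ), (1/8:ℝ), by norm_num, by norm_num, by norm_num, by norm_num, by norm_num, by norm_num, ?_⟩
    intro X Xb X' Xb' Z Γ σ σ'
    have h1 := log_combo (1/2:ℝ) (0:ℝ) (1/2:ℝ) (X + (Γ + (X' + Xb')/2 - (X + Xb)/2)/2) (X' - (Γ + (X' + Xb')/2 - (X + Xb)/2)/2) Z (by norm_num) (by norm_num) (by norm_num) (by norm_num)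
    have h2 := log_combo (3/10:ℝ) (2/5:ℝ) (3/10:ℝ) (Xb + (Γ + (X' + Xb')/2 - (X + Xb)/2)/2) (Xb' - (Γ + (X' + Xb')/2 - (X + Xb)/2)/2) Z (by norm_num) (by norm_num) (by norm_num) (by norm_num)
    simp +decide only [Hln, Hlinear, Htree, Uof, Wof, indR, lA, lB, lC, lD,
      if_true, if_false, ite_true, ite_false]
    linarith
  · refine ⟨(0:ℝ), (1/4:ℝ), (0:ℝ), (1/4:ℝ), by norm_num, by norm_num, by norm_num, by norm_num, by norm_num, by norm_num, ?_⟩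
    intro X Xb X' Xb' Z Γ σ σ'
    have h1 := log_combo (1/2:ℝ) (3/10:ℝ) (1/5:ℝ) (X + (Γ + (X' + Xb')/2 - (X + Xb)/2)/2) (X' - (Γ + (X' + Xb')/2 - (X + Xb)/2)/2) Z (by norm_num) (by norm_num) (by norm_num) (by norm_num)
    have h2 := log_combo (3/10:ℝ) (1/10:ℝ) (3/5:ℝ) (Xb + (Γ + (X' + Xb')/2 - (X + Xb)/2)/2) (Xb' - (Γ + (X' + Xb')/2 - (X + Xb)/2)/2) Z (by norm_num) (by norm_num) (by norm_num) (by norm_num)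
    simp +decide only [Hln, Hlinear, Htree, Uof, Wof, indR, lA, lB, lC, lD,
      if_true, if_false, ite_true, ite_false]
    linarith
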